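/- arXiv:2506.23943 — 7 statements merged into one kernel-verified Lean document; each statement's English description precedes it below -/
import Mathlib

section
/- Let G = K_{m,n} with parts A and B, and suppose the edge weights are such that every vertex of the part placed second in a separated layout is incident to edges of each weight 1, 2, ..., min{m,n}. Then every separated PQ-layout of ⟨G,w⟩ requires at least min{m,n} pages. Consequently, the separated priority queue number of K_{m,n} equals min{m,n}. -/
/-!
Order `min m n` vertices of the second part from right to left and, at the `i`-th of them,
pick an edge of weight `i + 1`. These edges form a `min m n`-inversion: any two of them are
a forbidden configuration, so they all lie on different pages.
-/

theorem Tuple.exists_strictAnti_comp {α : Type*} [LinearOrder α] {n k : ℕ} (f : Fin n → α)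
    (hf : Function.Injective f) (hk : k ≤ n) : ∃ b : Fin k → Fin n, StrictAnti (f ∘ b) := by
  have hsort : StrictMono (f ∘ Tuple.sort f) :=
    (Tuple.monotone_sort f).strictMono_of_injective (hf.comp (Tuple.sort f).injective)
  refine ⟨fun i => Tuple.sort f (Fin.castLE hk i).rev, fun i j hij => hsort ?_⟩
  exact Fin.rev_lt_rev.mpr ((Fin.castLE_lt_castLE_iff hk).mpr hij)

theorem injective_page_of_inversion {α β W P : Type*} [Preorder W] {k : ℕ}
    (ordA : α → ℕ) (ordB : β → ℕ) (hsep : ∀ a b, ordA a < ordB b)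
    (w : α → β → W) (page : α → β → P)
    (hvalid : ∀ a b a' b', page a b = page a' b' →
      ordA a' < ordB b → ordB b < ordB b' → w a b ≤ w a' b')
    (a : Fin k → α) (b : Fin k → β) (hb : StrictAnti (ordB ∘ b))
    (hw : StrictMono fun i => w (a i) (b i)) :
    Function.Injective fun i => page (a i) (b i) := by
  have forbidden : ∀ {i j}, i < j → page (a i) (b i) ≠ page (a j) (b j) := fun hij hpage =>
    (hw hij).not_ge (hvalid _ _ _ _ hpage.symm (hsep _ _) (hb hij))
  intro i j hpage
  by_contra hne
  rcases lt_or_gt_of_ne hne with hij | hji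
  · exact forbidden hij hpage
  · exact forbidden hji hpage.symm

theorem bipartite_separated_lower_general (m n : ℕ)
    (w : Fin m → Fin n → ℝ)
    (hw : ∀ b : Fin n, ∀ i : ℕ, 1 ≤ i → i ≤ min m n → ∃ a : Fin m, w a b = i)
    (p : ℕ) (ordA : Fin m → ℕ) (ordB : Fin n → ℕ)
    (hsep : ∀ a b, ordA a < ordB b)
    (hB : Function.Injective ordB)
    (page : Fin m → Fin n → Fin p)
    (hvalid : ∀ a b a' b', page a b = page a' b' →
      ordA a' < ordB b → ordB b < ordB b' → w a b ≤ w a' b') :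
    min m n ≤ p := by
  obtain ⟨b, hb⟩ := Tuple.exists_strictAnti_comp ordB hB (min_le_right m n)
  choose a ha using fun i : Fin (min m n) => hw (b i) (i + 1) (Nat.le_add_left 1 _) i.isLt
  have hweight : StrictMono fun i => w (a i) (b i) := fun i j hij => by
    simp only [ha, Nat.cast_add, Nat.cast_one, add_lt_add_iff_right, Nat.cast_lt]
    exact hij
  simpa using Fintype.card_le_of_injective _
    (injective_page_of_inversion ordA ordB hsep w page hvalid a b hb hweight)

/-- **Separated lower bound for `K_{m,n}`.**  Suppose the part `B = Fin n` is placed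
second in a separated layout (every vertex of `A = Fin m` precedes every vertex of `B`),
and the weights are such that every vertex `b ∈ B` is incident to edges of each weight
`1, 2, …, min m n`.  Then any page assignment avoiding forbidden configurations uses
at least `min m n` pages. -/
theorem bipartite_separated_lower (m n : ℕ) (hm : 1 ≤ m) (hn : 1 ≤ n)
    (w : Fin m → Fin n → ℝ)
    (hw : ∀ b : Fin n, ∀ i : ℕ, 1 ≤ i → i ≤ min m n → ∃ a : Fin m, w a b = i)
    (p : ℕ) (ordA : Fin m → ℕ) (ordB : Fin n → ℕ)
    (hsep : ∀ a b, ordA a < ordB b)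
    (hA : Function.Injective ordA) (hB : Function.Injective ordB)
    (page : Fin m → Fin n → Fin p)
    (hvalid : ∀ a b a' b', page a b = page a' b' →
      ordA a' < ordB b → ordB b < ordB b' → w a b ≤ w a' b') :
    min m n ≤ p :=
  bipartite_separated_lower_general m n w hw p ordA ordB hsep hB page hvalid
end

section
/- Consider an M × N boolean (0/1) matrix, where rows are indexed by 1..M (weights, bottom to top) and columns by 1..N (left to right), in which every column contains exactly M/2 ones (assume M even, M = 2N). Define a strictly decreasing path of ones as a sequence of cells (r_1,c_1), ..., (r_k,c_k) with value 1 such that r_1 > r_2 > ⋯ > r_k and c_1 < c_2 < ⋯ < c_k. Then there exists such a path of length at least ⌈((3−√5)/4)·M⌉. -/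
/-!
Order the ones of the matrix so that `p < q` when `q` lies strictly lower and strictly to the
right of `p`; decreasing paths are then chains. If the longest chain has `k` cells, the height
function takes at most `k` values, and each of its level sets is an antichain, hence meets every
anti-diagonal `row + col = const` at most once. A cell of height `h` has `h ≤ col` and
`h + row < M`, so the level set of height `h` has at most `3N - 1 - 2h` cells. Summing over
`h < k` gives `N² ≤ 3Nk - k²`, i.e. `k ≥ (3 - √5)/2 · N`.
-/

open Finset Order

lemma sum_range_sub_two_mul_add_mul_self (a k : ℕ) (hk : 2 * k ≤ a) :
    ∑ i ∈ range k, (a - 1 - 2 * i) + k * k = a * k := by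
  induction k with
  | zero => simp
  | succ k ih =>
    have hlast : a - 1 - 2 * k + (2 * k + 1) = a := by omega
    rw [sum_range_succ]
    nlinarith [ih (by omega)]

lemma three_sub_sqrt_five_div_two_mul_le {x y : ℝ} (hx : 0 ≤ x) (h : x * x + y * y ≤ 3 * x * y) :
    (3 - √5) / 2 * x ≤ y := by
  have hsq : (3 * x - 2 * y) ^ 2 ≤ (√5 * x) ^ 2 := by
    rw [mul_pow, Real.sq_sqrt (by norm_num)]
    nlinarith
  linarith [(abs_le_of_sq_le_sq' hsq (by positivity)).2]

variable {m n : ℕ}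

def Ones (A : Fin m → Fin n → Bool) : Type := {p : Fin m × Fin n // A p.1 p.2 = true}

namespace Ones

variable {A : Fin m → Fin n → Bool}

def row (p : Ones A) : Fin m := p.1.1

def col (p : Ones A) : Fin n := p.1.2

lemma isOne (p : Ones A) : A p.row p.col = true := p.2

lemma ext {p q : Ones A} (hr : p.row = q.row) (hc : p.col = q.col) : p = q :=
  Subtype.ext (Prod.ext hr hc)

instance : IsStrictOrder (Ones A) fun p q : Ones A => q.row < p.row ∧ p.col < q.col where
  irrefl _ h := lt_irrefl _ h.1
  trans _ _ _ h₁ h₂ := ⟨h₂.1.trans h₁.1, h₁.2.trans h₂.2⟩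

instance : PartialOrder (Ones A) :=
  partialOrderOfSO fun p q : Ones A => q.row < p.row ∧ p.col < q.col

instance : Fintype (Ones A) := inferInstanceAs (Fintype {p : Fin m × Fin n // A p.1 p.2 = true})

lemma lt_iff {p q : Ones A} : p < q ↔ q.row < p.row ∧ p.col < q.col := Iff.rfl

lemma height_le_col (p : Ones A) : height p ≤ (p.col : ℕ) :=
  (height_le_height_apply_of_strictMono (fun q : Ones A => (q.col : ℕ))
    (fun _ _ h => (lt_iff.1 h).2) p).trans_eq (height_nat _)

lemma height_le_sub_row (p : Ones A) : height p ≤ (m - 1 - p.row : ℕ) := by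
  refine (height_le_height_apply_of_strictMono (fun q : Ones A => m - 1 - (q.row : ℕ))
    (fun q r h => ?_) p).trans_eq (height_nat _)
  have := (lt_iff.1 h).1
  change m - 1 - (q.row : ℕ) < m - 1 - r.row
  omega

noncomputable def level (p : Ones A) : ℕ := (height p).toNat

lemma coe_level (p : Ones A) : (p.level : ℕ∞) = height p :=
  ENat.natCast_toNat ((height_le_col p).trans_lt (ENat.natCast_lt_top _)).ne

lemma level_le_col (p : Ones A) : p.level ≤ p.col :=
  Nat.cast_le.1 ((coe_level p).trans_le (height_le_col p))

lemma level_add_row_lt (p : Ones A) : p.level + p.row < m := by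
  have := p.row.isLt
  have : p.level ≤ m - 1 - p.row := Nat.cast_le.1 ((coe_level p).trans_le (height_le_sub_row p))
  omega

lemma level_lt_level {p q : Ones A} (h : p < q) : p.level < q.level := by
  simpa [← coe_level] using height_strictMono h (by simp [← coe_level])

lemma row_le_row_of_level_eq {p q : Ones A} (hl : p.level = q.level) (hc : p.col < q.col) :
    p.row ≤ q.row := by
  by_contra! hr
  exact (level_lt_level (lt_iff.2 ⟨hr, hc⟩)).ne hl

lemma row_add_col_injOn (h : ℕ) :
    Set.InjOn (fun p : Ones A => (p.row : ℕ) + p.col) {p | p.level = h} := by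
  intro p hp q hq hpq
  simp only [Set.mem_ofPred_eq] at hp hq hpq
  rcases lt_trichotomy p.col q.col with hc | hc | hc
  · have := row_le_row_of_level_eq (hp.trans hq.symm) hc
    omega
  · exact ext (Fin.ext (by rw [hc] at hpq; omega)) hc
  · have := row_le_row_of_level_eq (hq.trans hp.symm) hc
    omega

lemma card_level_eq_le (h : ℕ) : #{p : Ones A | p.level = h} ≤ m + n - 1 - 2 * h := by
  calc #{p : Ones A | p.level = h}
      ≤ #(Ico h (m + n - 1 - h)) := by
        refine card_le_card_of_injOn _ (fun p hp => ?_) (by simpa using row_add_col_injOn h)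
        simp only [coe_filter, mem_univ, true_and, Set.mem_ofPred_eq] at hp
        have := level_le_col p
        have := level_add_row_lt p
        have := p.col.isLt
        simp only [coe_Ico, Set.mem_Ico]
        omega
    _ = m + n - 1 - 2 * h := by simp only [Nat.card_Ico]; omega

lemma card_le_sum_range (k : ℕ) (hk : ∀ p : Ones A, p.level < k) :
    Fintype.card (Ones A) ≤ ∑ h ∈ range k, (m + n - 1 - 2 * h) := by
  rw [← card_univ, card_eq_sum_card_fiberwise (fun p _ => mem_range.2 (hk p))]
  exact sum_le_sum fun h _ => card_level_eq_le h

lemma card_eq_sum_card_col (A : Fin m → Fin n → Bool) :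
    Fintype.card (Ones A) = ∑ j, #{i | A i j = true} := by
  change Fintype.card {p : Fin m × Fin n // A p.1 p.2 = true} = _
  rw [Fintype.card_subtype, card_filter, Fintype.sum_prod_type_right]
  simp only [card_filter]

theorem exists_path_card_add_mul_self_le (A : Fin m → Fin n → Bool) :
    ∃ (k : ℕ) (r : Fin k → Fin m) (c : Fin k → Fin n),
      Fintype.card (Ones A) + k * k ≤ (m + n) * k ∧
      StrictAnti r ∧ StrictMono c ∧ ∀ i, A (r i) (c i) = true := by
  rcases isEmpty_or_nonempty (Ones A) with hA | hA
  · exact ⟨0, Fin.elim0, Fin.elim0, by simp, fun i => i.elim0, fun i => i.elim0, fun i => i.elim0⟩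
  obtain ⟨p, hp⟩ := Finite.exists_max (level : Ones A → ℕ)
  obtain ⟨s, -, hs⟩ := exists_series_of_height_eq_coe p (coe_level p).symm
  refine ⟨s.length + 1, fun i => (s i).row, fun i => (s i).col, ?_,
    fun _ _ hij => (lt_iff.1 (s.strictMono hij)).1,
    fun _ _ hij => (lt_iff.1 (s.strictMono hij)).2, fun i => (s i).isOne⟩
  have hcard := card_le_sum_range (A := A) (p.level + 1) fun q => Nat.lt_succ_of_le (hp q)
  have hsum := sum_range_sub_two_mul_add_mul_self (m + n) (p.level + 1)
    (by have := level_le_col p; have := level_add_row_lt p; have := p.col.isLt; omega)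
  rw [hs]
  omega

end Ones

theorem decreasing_path_in_matrix_general (N : ℕ)
    (A : Fin (2 * N) → Fin N → Bool)
    (hcol : ∀ j : Fin N, (Finset.univ.filter fun i => A i j = true).card = N) :
    ∃ (k : ℕ) (r : Fin k → Fin (2 * N)) (c : Fin k → Fin N),
      ⌈(3 - Real.sqrt 5) / 4 * (2 * N : ℝ)⌉₊ ≤ k ∧
      StrictAnti r ∧ StrictMono c ∧ ∀ i, A (r i) (c i) = true := by
  obtain ⟨k, r, c, hk, hr, hc, hA⟩ := Ones.exists_path_card_add_mul_self_le A
  refine ⟨k, r, c, ?_, hr, hc, hA⟩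
  rw [Ones.card_eq_sum_card_col, sum_congr rfl fun j _ => hcol j, sum_const, card_univ,
    Fintype.card_fin, smul_eq_mul] at hk
  have hreal : (N : ℝ) * N + k * k ≤ 3 * N * k := by
    exact_mod_cast (by linarith : N * N + k * k ≤ 3 * N * k)
  rw [Nat.ceil_le]
  linarith [three_sub_sqrt_five_div_two_mul_le (Nat.cast_nonneg N) hreal]

/-- **Decreasing path of ones in a column-balanced boolean matrix.**  Let `M = 2N`
and let `A` be an `M × N` boolean matrix (rows = weights bottom-to-top, columns =
vertices left-to-right) in which every column contains exactly `M / 2 = N` ones.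
Then there is a strictly decreasing path of ones (rows strictly decreasing, columns
strictly increasing) of length at least `⌈((3 − √5)/4)·M⌉`. -/
theorem decreasing_path_in_matrix (N : ℕ) (hN : 1 ≤ N)
    (A : Fin (2 * N) → Fin N → Bool)
    (hcol : ∀ j : Fin N, (Finset.univ.filter fun i => A i j = true).card = N) :
    ∃ (k : ℕ) (r : Fin k → Fin (2 * N)) (c : Fin k → Fin N),
      ⌈(3 - Real.sqrt 5) / 4 * (2 * N : ℝ)⌉₊ ≤ k ∧
      StrictAnti r ∧ StrictMono c ∧ ∀ i, A (r i) (c i) = true :=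
  decreasing_path_in_matrix_general N A hcol
end

section
/- Every edge-weighted rooted tree ⟨T,w⟩ with root r admits a PQ-layout with one page in which, for every non-root vertex v, the parent of v precedes v in the linear ordering. -/
/-!
Grow the set of placed vertices from the root in the manner of Prim's algorithm: at each step
place a frontier vertex (an unplaced vertex whose parent is placed) of minimum weight, and order
the vertices by the step at which they are placed. A parent is placed before its child. If
`par v' ≺ v ≺ v'`, then at the moment `v` was placed, `v'` was already on the frontier, so the
minimality of `w v` gives `w v ≤ w v'`.
-/

open Finset

namespace PQLayout

variable {V : Type} [Fintype V] [DecidableEq V]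

def frontier (par : V → V) (S : Finset V) : Finset V :=
  univ.filter fun u => u ∉ S ∧ par u ∈ S

@[simp]
lemma mem_frontier {par : V → V} {S : Finset V} {u : V} :
    u ∈ frontier par S ↔ u ∉ S ∧ par u ∈ S := by
  simp [frontier]

/-- A minimum-weight frontier vertex; the root when the frontier is empty. -/
noncomputable def primNext (r : V) (par : V → V) (w : V → ℝ) (S : Finset V) : V :=
  if h : (frontier par S).Nonempty then ((frontier par S).exists_min_image w h).choose else r

lemma primNext_spec {r : V} {par : V → V} {w : V → ℝ} {S : Finset V}
    (h : (frontier par S).Nonempty) :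
    primNext r par w S ∈ frontier par S ∧
      ∀ u ∈ frontier par S, w (primNext r par w S) ≤ w u := by
  rw [primNext, dif_pos h]
  exact ((frontier par S).exists_min_image w h).choose_spec

lemma primNext_of_not_nonempty {r : V} {par : V → V} {w : V → ℝ} {S : Finset V}
    (h : ¬(frontier par S).Nonempty) : primNext r par w S = r := by
  rw [primNext, dif_neg h]

/-- A vertex of minimal depth outside `S` has its parent in `S`. -/
lemma frontier_nonempty {r : V} {par : V → V} {depth : V → ℕ}
    (hdepth : ∀ v, v ≠ r → depth (par v) < depth v) {S : Finset V} (hr : r ∈ S)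
    (hS : S ≠ univ) : (frontier par S).Nonempty := by
  obtain ⟨x, hx⟩ := not_forall.mp (mt eq_univ_iff_forall.mpr hS)
  have hcompl : Sᶜ.Nonempty := ⟨x, mem_compl.mpr hx⟩
  obtain ⟨u, huS, hmin⟩ := Sᶜ.exists_min_image depth hcompl
  rw [mem_compl] at huS
  have hur : u ≠ r := by rintro rfl; exact huS hr
  refine ⟨u, mem_frontier.mpr ⟨huS, ?_⟩⟩
  by_contra hpar
  exact (hdepth u hur).not_ge (hmin _ (mem_compl.mpr hpar))

noncomputable def primChain (r : V) (par : V → V) (w : V → ℝ) : ℕ → Finset V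
  | 0 => {r}
  | n + 1 => insert (primNext r par w (primChain r par w n)) (primChain r par w n)

section Chain

variable {r : V} {par : V → V} {w : V → ℝ}

lemma primChain_mono : Monotone (primChain r par w) :=
  monotone_nat_of_le_succ fun _ => subset_insert _ _

lemma root_mem_primChain (n : ℕ) : r ∈ primChain r par w n :=
  primChain_mono n.zero_le (mem_singleton_self r)

variable {depth : V → ℕ} (hdepth : ∀ v, v ≠ r → depth (par v) < depth v)
include hdepth

lemma primChain_eq_univ_or_card_gt (n : ℕ) :
    primChain r par w n = univ ∨ n < #(primChain r par w n) := by
  induction n with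
  | zero => exact Or.inr (by simp [primChain])
  | succ n ih =>
    by_cases hfull : primChain r par w n = univ
    · left
      simp [primChain, hfull]
    · right
      have hne : (frontier par (primChain r par w n)).Nonempty :=
        frontier_nonempty hdepth (root_mem_primChain n) hfull
      have hnew : primNext r par w (primChain r par w n) ∉ primChain r par w n :=
        (mem_frontier.mp (primNext_spec hne).1).1
      rw [primChain, card_insert_of_notMem hnew]
      have := ih.resolve_left hfull
      omega

lemma exists_mem_primChain (v : V) : ∃ n, v ∈ primChain r par w n := by
  refine ⟨Fintype.card V, ?_⟩
  rcases primChain_eq_univ_or_card_gt (w := w) hdepth (Fintype.card V) with h | h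
  · exact h ▸ mem_univ v
  · exact absurd (card_le_univ _) h.not_ge

variable (w) in
noncomputable def entryTime (v : V) : ℕ :=
  Nat.find (exists_mem_primChain (w := w) hdepth v)

lemma mem_primChain_iff_entryTime_le {v : V} {n : ℕ} :
    v ∈ primChain r par w n ↔ entryTime w hdepth v ≤ n :=
  ⟨fun h => Nat.find_min' _ h,
    fun h => primChain_mono h (Nat.find_spec (exists_mem_primChain hdepth v))⟩

lemma eq_root_of_entryTime_eq_zero {v : V} (hv : entryTime w hdepth v = 0) : v = r := by
  have := (mem_primChain_iff_entryTime_le hdepth).mpr hv.le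
  simpa [primChain] using this

lemma entryTime_eq_succ {v : V} {n : ℕ} (hv : entryTime w hdepth v = n + 1) :
    v = primNext r par w (primChain r par w n) ∧ v ∈ frontier par (primChain r par w n) := by
  have hout : v ∉ primChain r par w n := by
    rw [mem_primChain_iff_entryTime_le hdepth]; omega
  have hin : v ∈ primChain r par w (n + 1) := by
    rw [mem_primChain_iff_entryTime_le hdepth]; omega
  have hv_next : v = primNext r par w (primChain r par w n) :=
    (mem_insert.mp hin).resolve_right hout
  have hne : (frontier par (primChain r par w n)).Nonempty := by
    by_contra hne
    rw [primNext_of_not_nonempty hne] at hv_next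
    exact hout (hv_next ▸ root_mem_primChain n)
  exact ⟨hv_next, hv_next ▸ (primNext_spec hne).1⟩

lemma entryTime_injective : Function.Injective (entryTime w hdepth) := by
  intro u v huv
  rcases hu : entryTime w hdepth u with _ | n
  · have hv := huv ▸ hu
    rw [eq_root_of_entryTime_eq_zero hdepth hu, eq_root_of_entryTime_eq_zero hdepth hv]
  · have hv := huv ▸ hu
    rw [(entryTime_eq_succ hdepth hu).1, (entryTime_eq_succ hdepth hv).1]

lemma entryTime_par_lt {v : V} (hv : v ≠ r) :
    entryTime w hdepth (par v) < entryTime w hdepth v := by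
  rcases hvn : entryTime w hdepth v with _ | n
  · exact absurd (eq_root_of_entryTime_eq_zero hdepth hvn) hv
  · have hpar := (mem_frontier.mp (entryTime_eq_succ hdepth hvn).2).2
    rw [mem_primChain_iff_entryTime_le hdepth] at hpar
    omega

/-- When `v` is placed, every `v'` with `par v' ≺ v ≺ v'` is on the frontier. -/
lemma weight_le_of_entryTime_lt {v v' : V} (hv : v ≠ r)
    (hpar : entryTime w hdepth (par v') < entryTime w hdepth v)
    (hlt : entryTime w hdepth v < entryTime w hdepth v') : w v ≤ w v' := by
  rcases hvn : entryTime w hdepth v with _ | n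
  · exact absurd (eq_root_of_entryTime_eq_zero hdepth hvn) hv
  · obtain ⟨hv_next, hv_frontier⟩ := entryTime_eq_succ hdepth hvn
    have hv'_frontier : v' ∈ frontier par (primChain r par w n) := by
      rw [mem_frontier, mem_primChain_iff_entryTime_le hdepth,
        mem_primChain_iff_entryTime_le hdepth]
      omega
    exact hv_next ▸ (primNext_spec ⟨v, hv_frontier⟩).2 v' hv'_frontier

end Chain

end PQLayout

open PQLayout in
theorem tree_one_page_general {V : Type} [Fintype V] (r : V) (par : V → V)
    (depth : V → ℕ)
    (hdepth : ∀ v, v ≠ r → depth (par v) < depth v)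
    (w : V → ℝ) :
    ∃ f : V → ℕ, Function.Injective f ∧
      (∀ v, v ≠ r → f (par v) < f v) ∧
      (∀ v v', v ≠ r → v' ≠ r →
        f (par v') < f v → f v < f v' → w v ≤ w v') := by
  classical
  exact ⟨entryTime w hdepth, entryTime_injective hdepth,
    fun _ hv => entryTime_par_lt hdepth hv,
    fun _ _ hv _ => weight_le_of_entryTime_lt hdepth hv⟩

/-- **One-page PQ-layout of a rooted tree.**  A rooted tree is given by a root `r`
and a parent map `par` together with a depth function certifying well-foundedness
(`depth (par v) < depth v` for `v ≠ r`).  The weight of a non-root vertex `v` is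
the weight `w v` of the edge `v — par v`.  There is a spine ordering `f` such that
every non-root vertex is preceded by its parent, and no forbidden configuration
occurs: there are no two tree edges `(par v, v)`, `(par v', v')` with
`f (par v') < f v < f v'` and `w v > w v'`. -/
theorem tree_one_page {V : Type} [Fintype V] (r : V) (par : V → V)
    (depth : V → ℕ) (hdr : depth r = 0)
    (hdepth : ∀ v, v ≠ r → depth (par v) < depth v)
    (w : V → ℝ) :
    ∃ f : V → ℕ, Function.Injective f ∧
      (∀ v, v ≠ r → f (par v) < f v) ∧
      (∀ v v', v ≠ r → v' ≠ r →
        f (par v') < f v → f v < f v' → w v ≤ w v') :=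
  tree_one_page_general r par depth hdepth w
end

section
/- Let C be a caterpillar (a tree consisting of a path p_1 p_2 ... p_k plus leaves each attached to some p_i), with any edge weights w. Then the linear ordering obtained by placing, for each i in order 1,...,k, first all leaves attached to p_i (for i = 1: before p_1; for i ≥ 2: between p_{i-1} and p_i) and then p_i, yields a one-page PQ-layout of ⟨C,w⟩ with p_k as the rightmost vertex. -/
/-!
Place the spine vertex `p_i` at `(i + 1)(n + 1)`, where `n` is the number of leaves, and the
leaves attached to `p_i` in the gap just below it. Every edge then lies in a block
`[m(n + 1), (m + 1)(n + 1)]` whose right end is the edge's right endpoint, so no edge spans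
the right endpoint of another one: the forbidden configuration never occurs, whatever the
weights are.
-/

/-- Endpoints of the edges of a caterpillar with spine `p_0, …, p_{k-1}` (type `Fin k`)
and leaves `L`, each leaf `l` attached to the spine vertex `attach l`.
A spine edge is `{p_i, p_{i+1}}`, a leaf edge is `{p_(attach l), l}`. -/
def catEnds (k : ℕ) {L : Type} (attach : L → Fin k) :
    ({i : Fin k // (i : ℕ) + 1 < k} ⊕ L) → (Fin k ⊕ L) × (Fin k ⊕ L)
  | .inl i => (Sum.inl i.1, Sum.inl ⟨(i.1 : ℕ) + 1, i.2⟩)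
  | .inr l => (Sum.inl (attach l), Sum.inr l)

/-- Weight of a caterpillar edge: `ws i` for the spine edge `p_i p_{i+1}`,
`wl l` for the leaf edge at leaf `l`. -/
def catW (k : ℕ) {L : Type} (ws : Fin k → ℝ) (wl : L → ℝ) :
    ({i : Fin k // (i : ℕ) + 1 < k} ⊕ L) → ℝ
  | .inl i => ws i.1
  | .inr l => wl l

theorem not_interleaved_of_forall_block {E : Type*} (c : ℕ) (lo hi : E → ℕ)
    (hblock : ∀ e, ∃ m, m * c ≤ lo e ∧ hi e = (m + 1) * c) (e e' : E)
    (hlo : lo e' < hi e) (hhi : hi e < hi e') : False := by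
  obtain ⟨m, -, hm⟩ := hblock e
  obtain ⟨m', hm'lo, hm'⟩ := hblock e'
  rw [hm, hm'] at hhi
  have hlt : m + 1 ≤ m' := Nat.lt_of_mul_lt_mul_right hhi |> Nat.lt_succ_iff.mp
  have : (m + 1) * c ≤ m' * c := Nat.mul_le_mul_right c hlt
  omega

section CaterpillarLayout

variable {k n : ℕ} {L : Type} (attach : L → Fin k) (g : L → Fin n)

def catPos : Fin k ⊕ L → ℕ
  | .inl i => (i + 1) * (n + 1)
  | .inr l => attach l * (n + 1) + (g l + 1)

@[simp]
theorem catPos_inl (i : Fin k) : catPos attach g (.inl i) = (i + 1) * (n + 1) := rfl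

@[simp]
theorem catPos_inr (l : L) : catPos attach g (.inr l) = attach l * (n + 1) + (g l + 1) := rfl

theorem lt_catPos_inr (l : L) : attach l * (n + 1) < catPos attach g (.inr l) := by
  simp only [catPos_inr]
  omega

theorem catPos_inr_lt (l : L) : catPos attach g (.inr l) < (attach l + 1) * (n + 1) := by
  simp only [catPos_inr, add_one_mul]
  have := (g l).2
  omega

theorem catPos_inl_mod (i : Fin k) : catPos attach g (.inl i) % (n + 1) = 0 :=
  Nat.mul_mod_left _ _

theorem catPos_inr_mod (l : L) : catPos attach g (.inr l) % (n + 1) = g l + 1 := by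
  rw [catPos_inr, Nat.mul_add_mod_self_right]
  exact Nat.mod_eq_of_lt (Nat.succ_lt_succ (g l).2)

theorem catPos_injective (hg : Function.Injective g) : Function.Injective (catPos attach g) := by
  rintro (i | l) (j | l') h
  · have : (i : ℕ) = j := by
      simpa using Nat.eq_of_mul_eq_mul_right (Nat.succ_pos n) h
    rw [Fin.ext this]
  all_goals
    have hmod := congrArg (· % (n + 1)) h
    simp only [catPos_inl_mod, catPos_inr_mod] at hmod
  · omega
  · omega
  · simp only [add_left_inj, Fin.val_inj] at hmod
    rw [hg hmod]

theorem catPos_inl_strictMono : StrictMono fun i ↦ catPos attach g (.inl i) := by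
  intro i j hij
  simp only [catPos_inl]
  gcongr
  exact hij

theorem catPos_inl_lt_inr {j : Fin k} {l : L} (hj : j < attach l) :
    catPos attach g (.inl j) < catPos attach g (.inr l) :=
  calc catPos attach g (.inl j) = (j + 1) * (n + 1) := rfl
    _ ≤ attach l * (n + 1) := Nat.mul_le_mul_right _ hj
    _ < catPos attach g (.inr l) := lt_catPos_inr attach g l

theorem catPos_inr_lt_attach (l : L) :
    catPos attach g (.inr l) < catPos attach g (.inl (attach l)) :=
  catPos_inr_lt attach g l

theorem catPos_lt_last {j : Fin k} (hj : (j : ℕ) + 1 = k) {v : Fin k ⊕ L} (hv : v ≠ .inl j) :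
    catPos attach g v < catPos attach g (.inl j) := by
  rcases v with i | l
  · have : i < j := by
      have : i ≠ j := fun h ↦ hv (h ▸ rfl)
      omega
    exact catPos_inl_strictMono attach g this
  · calc catPos attach g (.inr l) < (attach l + 1) * (n + 1) := catPos_inr_lt attach g l
      _ ≤ (j + 1) * (n + 1) := by gcongr; omega
      _ = catPos attach g (.inl j) := rfl

theorem catPos_catEnds_block (e : {i : Fin k // (i : ℕ) + 1 < k} ⊕ L) :
    ∃ m, m * (n + 1) ≤ min (catPos attach g (catEnds k attach e).1)
        (catPos attach g (catEnds k attach e).2) ∧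
      max (catPos attach g (catEnds k attach e).1) (catPos attach g (catEnds k attach e).2) =
        (m + 1) * (n + 1) := by
  rcases e with i | l
  · refine ⟨i.1 + 1, ?_, ?_⟩ <;> simp [catEnds]
  · refine ⟨attach l, ?_, ?_⟩
    · simp only [catEnds, min_eq_right (catPos_inr_lt_attach attach g l).le]
      exact (lt_catPos_inr attach g l).le
    · exact max_eq_left (catPos_inr_lt_attach attach g l).le

end CaterpillarLayout

/-- **One-page PQ-layout of a caterpillar.**  Placing, for each `i = 0, …, k-1` in
order, first the leaves attached to `p_i` and then `p_i` itself (spine in order,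
each leaf strictly between its predecessor spine vertex and its attachment vertex)
yields a one-page PQ-layout with the last spine vertex `p_{k-1}` rightmost:
no two edges `e, e'` satisfy `lpos e' < rpos e < rpos e'` with `w e > w e'`. -/
theorem caterpillar_one_page (k : ℕ) (hk : 1 ≤ k) {L : Type} [Fintype L]
    (attach : L → Fin k) (ws : Fin k → ℝ) (wl : L → ℝ) :
    ∃ f : Fin k ⊕ L → ℕ, Function.Injective f ∧
      (∀ i j : Fin k, i < j → f (Sum.inl i) < f (Sum.inl j)) ∧
      (∀ l : L, ∀ j : Fin k, j < attach l → f (Sum.inl j) < f (Sum.inr l)) ∧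
      (∀ l : L, f (Sum.inr l) < f (Sum.inl (attach l))) ∧
      (∀ v : Fin k ⊕ L, v ≠ Sum.inl ⟨k - 1, by omega⟩ →
        f v < f (Sum.inl ⟨k - 1, by omega⟩)) ∧
      (∀ e e' : {i : Fin k // (i : ℕ) + 1 < k} ⊕ L,
        min (f (catEnds k attach e').1) (f (catEnds k attach e').2) <
          max (f (catEnds k attach e).1) (f (catEnds k attach e).2) →
        max (f (catEnds k attach e).1) (f (catEnds k attach e).2) <
          max (f (catEnds k attach e').1) (f (catEnds k attach e').2) →
        catW k ws wl e ≤ catW k ws wl e') := by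
  let g := Fintype.equivFin L
  refine ⟨catPos attach g, catPos_injective attach g g.injective,
    fun _ _ ↦ (catPos_inl_strictMono attach g ·), fun _ _ ↦ catPos_inl_lt_inr attach g,
    catPos_inr_lt_attach attach g, fun _ ↦ catPos_lt_last attach g (Nat.sub_add_cancel hk),
    fun e e' hlo hhi ↦ ?_⟩
  exact (not_interleaved_of_forall_block _ _ _ (catPos_catEnds_block attach g) e e' hlo hhi).elim
end

section
/- Every edge-weighted cycle ⟨C,w⟩ admits a one-page PQ-layout with any prescribed vertex as the leftmost vertex. Concretely, starting from the prescribed vertex, repeatedly appending, among the two current 'frontier' neighbors of the placed segment of the cycle, the one whose connecting edge has smaller weight, yields an ordering with no forbidden configuration. -/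
/-!
Cut the cycle open at `v0`: its vertices become `0, 1, …, n`, with `n` standing for `0` again, and
edge `k` joins `k` and `k + 1` (offsets from `v0`). The greedy layout grows an arc `0, …, a`,
`n - b, …, n` around `v0`; exactly two edges leave it, `a` and `n - 1 - b`, and the far end of the
lighter one is placed next. In a forbidden configuration, if the later end of edge `i` is placed
at time `t + 1`, then both `i` and the edge `j` spanning that position leave the arc at time `t`.
So they are the two frontier edges, and the greedy step preferred `i`, whence `w i ≤ w j`.
-/

namespace CyclePQLayout

variable (n : ℕ) (W : ℕ → ℝ)

/-- `arc t = (a, b)`: after `t` greedy steps the placed vertices are `0, …, a` and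
`n - b, …, n`. -/
noncomputable def arc : ℕ → ℕ × ℕ
  | 0 => (0, 0)
  | t + 1 =>
    if W (arc t).1 ≤ W (n - 1 - (arc t).2) then ((arc t).1 + 1, (arc t).2)
    else ((arc t).1, (arc t).2 + 1)

lemma arc_succ_cases (t : ℕ) :
    (arc n W (t + 1) = ((arc n W t).1 + 1, (arc n W t).2) ∧
        W (arc n W t).1 ≤ W (n - 1 - (arc n W t).2)) ∨
      (arc n W (t + 1) = ((arc n W t).1, (arc n W t).2 + 1) ∧
        W (n - 1 - (arc n W t).2) < W (arc n W t).1) := by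
  by_cases h : W (arc n W t).1 ≤ W (n - 1 - (arc n W t).2)
  · exact .inl ⟨if_pos h, h⟩
  · exact .inr ⟨if_neg h, not_le.mp h⟩

lemma arc_fst_add_snd (t : ℕ) : (arc n W t).1 + (arc n W t).2 = t := by
  induction t with
  | zero => rfl
  | succ t ih => rcases arc_succ_cases n W t with ⟨h, -⟩ | ⟨h, -⟩ <;> rw [h] <;> omega

def Placed (x t : ℕ) : Prop := x ≤ (arc n W t).1 ∨ n ≤ x + (arc n W t).2

lemma placed_monotone (x : ℕ) : Monotone (Placed n W x) := by
  refine monotone_nat_of_le_succ fun t ht => ?_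
  unfold Placed at ht ⊢
  rcases arc_succ_cases n W t with ⟨h, -⟩ | ⟨h, -⟩ <;> rw [h] <;> omega

lemma placed_sub_one (x : ℕ) : Placed n W x (n - 1) := by
  have := arc_fst_add_snd n W (n - 1)
  unfold Placed
  omega

lemma eq_of_placed_succ {x y t : ℕ} (hx : Placed n W x (t + 1)) (hx' : ¬Placed n W x t)
    (hy : Placed n W y (t + 1)) (hy' : ¬Placed n W y t) : x = y := by
  unfold Placed at *
  rcases arc_succ_cases n W t with ⟨h, -⟩ | ⟨h, -⟩ <;> rw [h] at hx hy <;> omega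

noncomputable def pos (x : ℕ) : ℕ := sInf {t | Placed n W x t}

lemma pos_le_iff {x t : ℕ} : pos n W x ≤ t ↔ Placed n W x t := by
  refine ⟨fun h => placed_monotone n W x h ?_, fun h => Nat.sInf_le h⟩
  exact Nat.sInf_mem (s := {t | Placed n W x t}) ⟨n - 1, placed_sub_one n W x⟩

lemma pos_eq_zero_iff {x : ℕ} (hx : x < n) : pos n W x = 0 ↔ x = 0 := by
  rw [← Nat.le_zero, pos_le_iff]
  simp only [Placed, arc]
  omega

lemma pos_self : pos n W n = 0 :=
  Nat.le_zero.mp (pos_le_iff n W |>.mpr (.inr (Nat.le_add_right n _)))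

lemma pos_injOn : Set.InjOn (pos n W) (Set.Iio n) := by
  intro x hx y hy hxy
  cases ht : pos n W x with
  | zero => rw [(pos_eq_zero_iff n W hx).mp ht, (pos_eq_zero_iff n W hy).mp (hxy ▸ ht)]
  | succ s =>
    have hx' := (pos_le_iff n W (x := x) (t := s)).not
    have hy' := (pos_le_iff n W (x := y) (t := s)).not
    exact eq_of_placed_succ n W ((pos_le_iff n W).mp ht.le) (hx'.mp (by omega))
      ((pos_le_iff n W).mp (hxy ▸ ht).le) (hy'.mp (by omega))

lemma pos_ne_pos_succ (hn : 2 ≤ n) {k : ℕ} (hk : k < n) : pos n W k ≠ pos n W (k + 1) := by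
  rcases Nat.lt_or_ge (k + 1) n with h | h
  · exact fun heq => absurd (pos_injOn n W hk h heq) k.succ_ne_self.symm
  · rw [show k + 1 = n by omega, pos_self, Ne, pos_eq_zero_iff n W hk]
    omega

def Crossing (k t : ℕ) : Prop := Xor (Placed n W k t) (Placed n W (k + 1) t)

lemma crossing_iff {k t : ℕ} : Crossing n W k t ↔
    min (pos n W k) (pos n W (k + 1)) ≤ t ∧ t < max (pos n W k) (pos n W (k + 1)) := by
  simp only [Crossing, Xor, ← pos_le_iff]
  omega

lemma frontier_of_crossing {k t : ℕ} (h : Crossing n W k t) :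
    k = (arc n W t).1 ∨ k + 1 + (arc n W t).2 = n := by
  unfold Crossing Placed at h
  rcases h with h | h <;> omega

lemma weight_le_of_crossing {k k' t : ℕ}
    (hk : Crossing n W k t) (hk₁ : ¬Crossing n W k (t + 1))
    (hk' : Crossing n W k' t) (hk'₁ : Crossing n W k' (t + 1)) : W k ≤ W k' := by
  have hne : k ≠ k' := by rintro rfl; exact hk₁ hk'₁
  have fk := frontier_of_crossing n W hk
  have fk' := frontier_of_crossing n W hk'
  have fk'₁ := frontier_of_crossing n W hk'₁
  rcases arc_succ_cases n W t with ⟨h, hW⟩ | ⟨h, hW⟩ <;> rw [h] at fk'₁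
  · rwa [show k = (arc n W t).1 by omega, show k' = n - 1 - (arc n W t).2 by omega]
  · rw [show k = n - 1 - (arc n W t).2 by omega, show k' = (arc n W t).1 by omega]
    exact hW.le

lemma weight_le_of_min_lt_max_lt_max (hn : 2 ≤ n) {k k' : ℕ} (hk : k < n)
    (hmin : min (pos n W k') (pos n W (k' + 1)) < max (pos n W k) (pos n W (k + 1)))
    (hmax : max (pos n W k) (pos n W (k + 1)) < max (pos n W k') (pos n W (k' + 1))) :
    W k ≤ W k' := by
  have hne := pos_ne_pos_succ n W hn hk
  set t := max (pos n W k) (pos n W (k + 1)) - 1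
  apply weight_le_of_crossing n W (t := t) <;> rw [crossing_iff] <;> omega

lemma pos_succ_mod {k : ℕ} (hk : k < n) : pos n W ((k + 1) % n) = pos n W (k + 1) := by
  rcases Nat.lt_or_ge (k + 1) n with h | h
  · rw [Nat.mod_eq_of_lt h]
  · rw [show k + 1 = n by omega, Nat.mod_self, pos_self, pos_eq_zero_iff n W (by omega)]

end CyclePQLayout

open CyclePQLayout

/-- **One-page PQ-layout of a cycle with prescribed leftmost vertex.**  The cycle
on `Fin n` has edges `{i, i+1}` (addition mod `n`) of weight `w i`.  For any
prescribed vertex `v0` there is a spine ordering `f` with `v0` leftmost such that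
no two cycle edges `e, e'` satisfy `lpos e' < rpos e < rpos e'` and `w e > w e'`. -/
theorem cycle_one_page (n : ℕ) (hn : 3 ≤ n) (w : Fin n → ℝ) (v0 : Fin n) :
    ∃ f : Fin n → ℕ, Function.Injective f ∧
      (∀ v, v ≠ v0 → f v0 < f v) ∧
      (∀ i j : Fin n,
        min (f j) (f (j + (⟨1, by omega⟩ : Fin n))) < max (f i) (f (i + (⟨1, by omega⟩ : Fin n))) →
        max (f i) (f (i + (⟨1, by omega⟩ : Fin n))) < max (f j) (f (j + (⟨1, by omega⟩ : Fin n))) →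
        w i ≤ w j) := by
  have : NeZero n := ⟨by omega⟩
  set W : ℕ → ℝ := fun m => w (v0 + Fin.ofNat n m)
  have hW (u : Fin n) : W (u - v0).val = w u := by simp [W]
  have hsucc (u : Fin n) :
      pos n W (u + ⟨1, by omega⟩ - v0 : Fin n) = pos n W ((u - v0 : Fin n) + 1) := by
    rw [show u + ⟨1, by omega⟩ - v0 = (u - v0) + ⟨1, by omega⟩ by abel, Fin.val_add]
    exact pos_succ_mod n W (Fin.isLt _)
  refine ⟨fun u => pos n W (u - v0).val, ?_, fun v hv => ?_, fun i j hmin hmax => ?_⟩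
  · exact fun u v h =>
      sub_left_injective (Fin.val_injective (pos_injOn n W (Fin.isLt _) (Fin.isLt _) h))
  · have hv0 : (v - v0).val ≠ 0 := fun h => hv (sub_eq_zero.mp (Fin.val_injective h))
    simp only [sub_self, Fin.val_zero, (pos_eq_zero_iff n W (Nat.pos_of_neZero n)).mpr rfl]
    exact Nat.pos_of_ne_zero ((pos_eq_zero_iff n W (Fin.isLt _)).not.mpr hv0)
  · rw [← hW i, ← hW j]
    simp only [hsucc] at hmin hmax
    exact weight_le_of_min_lt_max_lt_max n W (by omega) (Fin.isLt _) hmin hmax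
end

section
/- The complete bipartite graph K_{2,3} has priority queue number 1: for every edge-weight function w on K_{2,3}, there exists a linear ordering of its 5 vertices such that no two edges e = uv (u ≺ v) and e' = u'v' (u' ≺ v') satisfy v ≺ v' and w(e) > w(e'). -/
/-!
Let `u₀ v₂` be a heaviest edge and label the other two vertices `v₀, v₁` so that
`w(u₀ v₀) ≤ w(u₀ v₁)`. Comparing `w(u₀ v₁)` successively with `w(u₁ v₀)`, `w(u₁ v₁)` and
`w(u₁ v₂)`, one of the spine orders `v₀ u₀ v₁ u₁ v₂`, `v₁ u₀ v₀ u₁ v₂`, `v₁ u₁ v₀ u₀ v₂`,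
`v₁ v₂ u₁ v₀ u₀` works; the first three are one pattern up to relabelling the vertices.
-/

variable {α β α' β' R : Type*}

/-- The vertices of `K_{α,β}` are `α ⊕ β` and `f` gives their positions on the spine;
the edge `(a, b)` spans from `min` to `max` of the positions of `a` and `b`. -/
def IsPQLayout [LE R] (w : α → β → R) (f : α ⊕ β → ℕ) : Prop :=
  Function.Injective f ∧ ∀ a b a' b',
    min (f (.inl a')) (f (.inr b')) < max (f (.inl a)) (f (.inr b)) →
    max (f (.inl a)) (f (.inr b)) < max (f (.inl a')) (f (.inr b')) →
    w a b ≤ w a' b'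

def HasPQLayout [LE R] (w : α → β → R) : Prop :=
  ∃ f, IsPQLayout w f

section Relabel

variable [LE R]

theorem IsPQLayout.comp_sumMap {w : α' → β' → R} {f : α' ⊕ β' → ℕ} (hf : IsPQLayout w f)
    (σ : α ≃ α') (τ : β ≃ β') :
    IsPQLayout (fun a b => w (σ a) (τ b)) (f ∘ Sum.map σ τ) :=
  ⟨hf.1.comp (Equiv.sumCongr σ τ).injective, fun a b a' b' => hf.2 (σ a) (τ b) (σ a') (τ b')⟩

theorem HasPQLayout.of_relabel {w : α' → β' → R} (σ : α ≃ α') (τ : β ≃ β')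
    (h : HasPQLayout fun a b => w (σ a) (τ b)) : HasPQLayout w := by
  obtain ⟨f, hf⟩ := h
  have := hf.comp_sumMap σ.symm τ.symm
  simp only [Equiv.apply_symm_apply] at this
  exact ⟨_, this⟩

end Relabel

section Layouts

variable [LE R] (w : Fin 2 → Fin 3 → R)

theorem isPQLayout_v₀u₀v₁u₁v₂ (h₁ : w 0 0 ≤ w 1 0) (h₂ : w 0 1 ≤ w 1 0) (h₃ : w 0 1 ≤ w 0 2)
    (h₄ : w 1 0 ≤ w 0 2) (h₅ : w 1 1 ≤ w 0 2) :
    IsPQLayout w (Sum.elim ![1, 3] ![0, 2, 4]) := by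
  refine ⟨by decide, fun a b a' b' hl hr => ?_⟩
  fin_cases a <;> fin_cases b <;> fin_cases a' <;> fin_cases b' <;> simp_all

theorem isPQLayout_v₁v₂u₁v₀u₀ (h₁ : ∀ m, w 1 m ≤ w 0 1) (h₂ : ∀ m, w 1 m ≤ w 0 2) :
    IsPQLayout w (Sum.elim ![4, 2] ![3, 0, 1]) := by
  refine ⟨by decide, fun a b a' b' hl hr => ?_⟩
  fin_cases a <;> fin_cases b <;> fin_cases a' <;> fin_cases b' <;> simp_all

end Layouts

theorem swap_zero_one_apply_two : Equiv.swap (0 : Fin 3) 1 2 = 2 := by decide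

section Normalized

variable [LinearOrder R]

theorem hasPQLayout_of_forall_le_of_le (w : Fin 2 → Fin 3 → R) (hmax : ∀ k m, w k m ≤ w 0 2)
    (h₀₁ : w 0 0 ≤ w 0 1) : HasPQLayout w := by
  rcases le_total (w 0 1) (w 1 0) with h₁ | h₁
  · exact ⟨_, isPQLayout_v₀u₀v₁u₁v₂ w (h₀₁.trans h₁) h₁ (hmax 0 1) (hmax 1 0) (hmax 1 1)⟩
  rcases le_total (w 0 1) (w 1 1) with h₂ | h₂
  · refine .of_relabel (Equiv.refl _) (Equiv.swap 0 1) ⟨_, isPQLayout_v₀u₀v₁u₁v₂ _ ?_ ?_ ?_ ?_ ?_⟩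
      <;> simp only [Equiv.refl_apply, Equiv.swap_apply_left, Equiv.swap_apply_right,
        swap_zero_one_apply_two]
    exacts [h₂, h₀₁.trans h₂, hmax 0 0, hmax 1 1, hmax 1 0]
  rcases le_total (w 0 1) (w 1 2) with h₃ | h₃
  · refine .of_relabel (Equiv.swap 0 1) (Equiv.swap 0 1) ⟨_, isPQLayout_v₀u₀v₁u₁v₂ _ ?_ ?_ ?_ ?_ ?_⟩
      <;> simp only [Equiv.swap_apply_left, Equiv.swap_apply_right, swap_zero_one_apply_two]
    exacts [h₂, h₁, h₁.trans h₃, h₃, h₀₁.trans h₃]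
  · refine ⟨_, isPQLayout_v₁v₂u₁v₀u₀ w (fun m => ?_) (hmax 1)⟩
    fin_cases m
    exacts [h₁, h₂, h₃]

theorem hasPQLayout_fin_two_fin_three (w : Fin 2 → Fin 3 → R) : HasPQLayout w := by
  obtain ⟨⟨i, c⟩, hmax⟩ := Finite.exists_max fun p : Fin 2 × Fin 3 => w p.1 p.2
  have hmax_relabel {σ : Equiv.Perm (Fin 2)} {τ : Equiv.Perm (Fin 3)} (hσ : σ 0 = i)
      (hτ : τ 2 = c) : ∀ k m, w (σ k) (τ m) ≤ w (σ 0) (τ 2) :=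
    fun k m => hσ ▸ hτ ▸ hmax (σ k, τ m)
  have hσ : Equiv.swap 0 i 0 = i := Equiv.swap_apply_left 0 i
  set τ := Equiv.swap 2 c
  have hτ : τ 2 = c := Equiv.swap_apply_left 2 c
  rcases le_total (w i (τ 0)) (w i (τ 1)) with h | h
  · exact .of_relabel (Equiv.swap 0 i) τ
      (hasPQLayout_of_forall_le_of_le _ (hmax_relabel hσ hτ) (by rwa [hσ]))
  · have hτ' : τ (Equiv.swap 0 1 2) = c := by rwa [swap_zero_one_apply_two]
    exact .of_relabel (Equiv.swap 0 i) ((Equiv.swap 0 1).trans τ)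
      (hasPQLayout_of_forall_le_of_le _ (hmax_relabel hσ hτ') (by simpa [hσ] using h))

end Normalized

/-- **`pqn(K_{2,3}) = 1`.**  For every edge-weight function `w` on the complete
bipartite graph with parts `Fin 2` and `Fin 3` there is an injective spine ordering
`f` of the five vertices with no forbidden configuration: there are no two edges
`(a, b)`, `(a', b')` with `lpos (a', b') < rpos (a, b) < rpos (a', b')` and
`w a b > w a' b'`. -/
theorem k23_pqn_one (w : Fin 2 → Fin 3 → ℝ) :
    ∃ f : Fin 2 ⊕ Fin 3 → ℕ, Function.Injective f ∧
      ∀ a b a' b',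
        min (f (.inl a')) (f (.inr b')) < max (f (.inl a)) (f (.inr b)) →
        max (f (.inl a)) (f (.inr b)) < max (f (.inl a')) (f (.inr b')) →
        w a b ≤ w a' b' :=
  hasPQLayout_fin_two_fin_three w
end

section
/- The complete graph K_4 has priority queue number strictly greater than 1: there exists an edge-weight function w on K_4 (with vertices a,b,c,d, where w(ab) is maximal, w(cd) second largest, and the other weights strictly smaller) such that no linear ordering of the four vertices avoids the forbidden configuration. -/
/-!
Let `ab` be the heaviest edge and `cd` the second heaviest, both oriented left to right.
If `b` precedes `d`, the lighter edge `ad` shares its left end `a` with `ab` and ends after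
`b`; otherwise the lighter edge `cb` does the same to `cd`. Either way a heavier edge ends
strictly inside a lighter edge that starts no later, which a one-page PQ-layout forbids.
-/

section ForbiddenPair

variable {V α β : Type*} [LinearOrder α]

/-- An injective `f` is a one-page PQ-layout of the complete graph weighted by `w`
exactly when `¬ HasForbiddenPair w f`. -/
def HasForbiddenPair [LT β] (w : Sym2 V → β) (f : V → α) : Prop :=
  ∃ u v u' v' : V, u ≠ v ∧ u' ≠ v' ∧
    f u < f v ∧ f u' < f v' ∧ f u' < f v ∧ f v < f v' ∧ w s(u', v') < w s(u, v)

theorem hasForbiddenPair_of_lt_of_lt [LT β] {w : Sym2 V → β} {f : V → α} {u v x : V}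
    (huv : f u < f v) (hvx : f v < f x) (hw : w s(u, x) < w s(u, v)) :
    HasForbiddenPair w f :=
  ⟨u, v, u, x, ne_of_apply_ne f huv.ne, ne_of_apply_ne f (huv.trans hvx).ne,
    huv, huv.trans hvx, huv, hvx, hw⟩

theorem hasForbiddenPair_of_lt [LT β] {w : Sym2 V → β} {f : V → α}
    (hf : Function.Injective f) {a b c d : V} (hab : f a < f b) (hcd : f c < f d) (hbd : b ≠ d)
    (had : w s(a, d) < w s(a, b)) (hcb : w s(c, b) < w s(c, d)) :
    HasForbiddenPair w f := by
  rcases (hf.ne hbd).lt_or_gt with hbd | hdb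
  · exact hasForbiddenPair_of_lt_of_lt hab hbd had
  · exact hasForbiddenPair_of_lt_of_lt hcd hdb hcb

theorem hasForbiddenPair_of_two_heaviest [Preorder β] {w : Sym2 V → β} {f : V → α}
    (hf : Function.Injective f) {a b c d : V} (hab : a ≠ b) (hcd : c ≠ d)
    (hac : a ≠ c) (had : a ≠ d) (hbc : b ≠ c) (hbd : b ≠ d)
    (hcd_ab : w s(c, d) < w s(a, b))
    (hlight : ∀ u v : V, u ≠ v → s(u, v) ≠ s(a, b) → s(u, v) ≠ s(c, d) → w s(u, v) < w s(c, d)) :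
    HasForbiddenPair w f := by
  wlog hfab : f a < f b generalizing a b
  · rw [Sym2.eq_swap (a := a)] at hcd_ab hlight
    exact this hab.symm hbc hbd hac had hcd_ab hlight ((hf.ne hab).lt_or_gt.resolve_left hfab)
  wlog hfcd : f c < f d generalizing c d
  · rw [Sym2.eq_swap (a := c)] at hcd_ab hlight
    exact this hcd.symm had hac hbd hbc hcd_ab hlight ((hf.ne hcd).lt_or_gt.resolve_left hfcd)
  refine hasForbiddenPair_of_lt hf hfab hfcd hbd ?_ ?_
  · exact (hlight a d had (by simp [hab, hbd.symm]) (by simp [hac, had])).trans hcd_ab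
  · exact hlight c b hbc.symm (by simp [hac.symm, hbc.symm]) (by simp [hbd, hcd])

end ForbiddenPair

/-- **`pqn(K_4) > 1`.**  There is an edge-weight function `w` on the complete graph
on `Fin 4` (vertices `a = 0`, `b = 1`, `c = 2`, `d = 3`, where `w(ab)` is maximal,
`w(cd)` second largest, and all other weights strictly smaller) such that *every*
injective spine ordering `f` contains a forbidden configuration: two edges
`e = uv`, `e' = u'v'` with `f u < f v`, `f u' < f v'`, `f u' < f v < f v'` and
`w e > w e'`. -/
theorem k4_pqn_gt_one :
    ∃ w : Sym2 (Fin 4) → ℝ,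
      (w s((2 : Fin 4), (3 : Fin 4)) < w s((0 : Fin 4), (1 : Fin 4))) ∧
      (∀ u v : Fin 4, u ≠ v →
        s(u, v) ≠ s((0 : Fin 4), (1 : Fin 4)) →
        s(u, v) ≠ s((2 : Fin 4), (3 : Fin 4)) →
        w s(u, v) < w s((2 : Fin 4), (3 : Fin 4))) ∧
      ∀ f : Fin 4 → ℕ, Function.Injective f →
        ∃ u v u' v' : Fin 4, u ≠ v ∧ u' ≠ v' ∧
          f u < f v ∧ f u' < f v' ∧ f u' < f v ∧ f v < f v' ∧
          w s(u', v') < w s(u, v) := by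
  set w : Sym2 (Fin 4) → ℝ := fun e => if e = s(0, 1) then 2 else if e = s(2, 3) then 1 else 0
  have hcd_ab : w s(2, 3) < w s(0, 1) := by norm_num [w, Fin.ext_iff]
  have hlight : ∀ u v : Fin 4, u ≠ v → s(u, v) ≠ s(0, 1) → s(u, v) ≠ s(2, 3) →
      w s(u, v) < w s(2, 3) := by
    intro u v _ h01 h23
    norm_num [w, h01, h23, Fin.ext_iff]
  exact ⟨w, hcd_ab, hlight, fun f hf => hasForbiddenPair_of_two_heaviest hf
    (by decide) (by decide) (by decide) (by decide) (by decide) (by decide) hcd_ab hlight⟩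
end
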